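/- arXiv:0711.1936 — 2 statements merged into one kernel-verified Lean document; each statement's English description precedes it below -/
import Mathlib

section
/- Every eigenvector of a k-Schmidt witness corresponding to a negative eigenvalue has Schmidt rank strictly greater than k. -/
open Matrix
open scoped ComplexOrder

/-- The coordinate matrix of a vector in `ℂ^{d1} ⊗ ℂ^{d2}`. -/
noncomputable def coordMat {d1 d2 : ℕ} (Ψ : Fin d1 × Fin d2 → ℂ) :
    Matrix (Fin d1) (Fin d2) ℂ :=
  Matrix.of fun i j => Ψ (i, j)

/-- The Schmidt rank of a vector: the rank of its coordinate matrix. -/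
noncomputable def schmidtRank {d1 d2 : ℕ} (Ψ : Fin d1 × Fin d2 → ℂ) : ℕ :=
  (coordMat Ψ).rank

/-- A `k`-Schmidt witness: a Hermitian operator which is nonnegative on all vectors of
Schmidt rank at most `k`, but has negative expectation on some density operator. -/
structure IsSchmidtWitness {d1 d2 : ℕ} (k : ℕ)
    (W : Matrix (Fin d1 × Fin d2) (Fin d1 × Fin d2) ℂ) : Prop where
  herm : W.IsHermitian
  pos : ∀ Ψ : Fin d1 × Fin d2 → ℂ, schmidtRank Ψ ≤ k → 0 ≤ (star Ψ ⬝ᵥ W.mulVec Ψ).re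
  detects : ∃ ρ : Matrix (Fin d1 × Fin d2) (Fin d1 × Fin d2) ℂ,
    ρ.PosSemidef ∧ ρ.trace = 1 ∧ Complex.re (Matrix.trace (ρ * W)) < 0

/-- Every eigenvector of a `k`-Schmidt witness corresponding to a negative eigenvalue has
Schmidt rank strictly greater than `k`. -/
theorem neg_eigenvector_schmidtRank_gt (d1 d2 k : ℕ)
    (W : Matrix (Fin d1 × Fin d2) (Fin d1 × Fin d2) ℂ)
    (hW : IsSchmidtWitness k W)
    (μ : ℝ) (hμ : μ < 0) (v : Fin d1 × Fin d2 → ℂ) (hv : v ≠ 0)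
    (heig : W.mulVec v = (μ : ℂ) • v) :
    k < schmidtRank v := by
  by_contra h
  push_neg at h
  have hpos := hW.pos v h
  have hquad : star v ⬝ᵥ W.mulVec v = (μ : ℂ) * (star v ⬝ᵥ v) := by
    rw [heig, dotProduct_smul, smul_eq_mul]
  have hvv : (star v ⬝ᵥ v).re > 0 := by
    have : star v ⬝ᵥ v = ∑ i, star (v i) * v i := rfl
    rw [this]
    have hre : (∑ i, star (v i) * v i).re = ∑ i, Complex.normSq (v i) := by
      rw [Complex.re_sum]
      exact Finset.sum_congr rfl fun i _ => by
        simp [Complex.normSq_apply, mul_comm]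
    rw [hre]
    have : ∃ i, v i ≠ 0 := by
      by_contra hc; push_neg at hc; exact hv (funext hc)
    obtain ⟨i, hi⟩ := this
    exact Finset.sum_pos' (fun j _ => Complex.normSq_nonneg _)
      ⟨i, Finset.mem_univ i, Complex.normSq_pos.mpr hi⟩
  rw [hquad] at hpos
  have : ((μ : ℂ) * (star v ⬝ᵥ v)).re = μ * (star v ⬝ᵥ v).re := by
    simp [Complex.mul_re, Complex.ofReal_re, Complex.ofReal_im]
  rw [this] at hpos
  nlinarith
end

section
/- Every entanglement witness on ℂ² ⊗ ℂ² has exactly one negative eigenvalue, exactly three positive eigenvalues, and trivial kernel. -/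
/-!
A witness `W` is not positive semidefinite, so it has an eigenvector `g` with negative eigenvalue.
Every plane in `ℂ² ⊗ ℂ²` contains a simple tensor: the determinant of `s a + t b`, read as a
`2 × 2` matrix, is a binary quadratic form in `(s, t)` and has a nontrivial zero over `ℂ`. If
another eigenvalue `λ` were `≤ 0`, the plane spanned by `g` and an eigenvector for `λ` would
contain a simple tensor `ψ` with `⟨ψ, W ψ⟩ ≤ 0`; since `W` is nonnegative on simple tensors this
forces `λ = 0` and `ψ ∈ ker W`. But a simple tensor `ψ` in the kernel makes `W` positive
semidefinite: whenever the polarized determinant `D(ψ, x)` is nonzero, some `x + t ψ` is a simple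
tensor with the same expectation value as `x`, and such `x` are dense.
-/

open Matrix
open scoped ComplexOrder

/-- The simple tensor `φ ⊗ χ` as a vector in `ℂ² ⊗ ℂ²`. -/
def tensorVec {d1 d2 : ℕ} (φ : Fin d1 → ℂ) (χ : Fin d2 → ℂ) : Fin d1 × Fin d2 → ℂ :=
  fun p => φ p.1 * χ p.2

/-- The span of the eigenvectors of `W` corresponding to negative eigenvalues. -/
noncomputable def negSpace {d1 d2 : ℕ}
    (W : Matrix (Fin d1 × Fin d2) (Fin d1 × Fin d2) ℂ) :
    Submodule ℂ (Fin d1 × Fin d2 → ℂ) :=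
  ⨆ (μ : ℝ) (_ : μ < 0), Module.End.eigenspace (Matrix.toLin' W) (μ : ℂ)

/-- The span of the eigenvectors of `W` corresponding to positive eigenvalues. -/
noncomputable def posSpace {d1 d2 : ℕ}
    (W : Matrix (Fin d1 × Fin d2) (Fin d1 × Fin d2) ℂ) :
    Submodule ℂ (Fin d1 × Fin d2 → ℂ) :=
  ⨆ (μ : ℝ) (_ : 0 < μ), Module.End.eigenspace (Matrix.toLin' W) (μ : ℂ)

theorem IsAlgClosed.exists_ne_zero_quadratic_eq_zero {K : Type*} [Field K] [IsAlgClosed K]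
    (a b c : K) : ∃ s t : K, (s ≠ 0 ∨ t ≠ 0) ∧ a * s ^ 2 + b * (s * t) + c * t ^ 2 = 0 := by
  by_cases ha : a = 0
  · exact ⟨1, 0, .inl one_ne_zero, by simp [ha]⟩
  obtain ⟨r, hr⟩ := IsAlgClosed.exists_root (.C a * .X ^ 2 + .C b * .X + .C c)
    (by rw [Polynomial.degree_quadratic ha]; decide)
  exact ⟨r, 1, .inr one_ne_zero, by simpa using hr⟩

theorem Submodule.dense_compl {𝕜 M : Type*} [NontriviallyNormedField 𝕜] [AddCommGroup M]
    [Module 𝕜 M] [TopologicalSpace M] [ContinuousAdd M] [ContinuousSMul 𝕜 M]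
    {s : Submodule 𝕜 M} (hs : s ≠ ⊤) : Dense (s : Set M)ᶜ :=
  interior_eq_empty_iff_dense_compl.mp <|
    Set.not_nonempty_iff_eq_empty.mp fun h ↦ hs (s.eq_top_of_nonempty_interior' h)

theorem Matrix.PosSemidef.trace_mul_nonneg {𝕜 n : Type*} [RCLike 𝕜] [Fintype n]
    {A B : Matrix n n 𝕜} (hA : A.PosSemidef) (hB : B.PosSemidef) : 0 ≤ (A * B).trace := by
  classical
  open scoped MatrixOrder in
  obtain ⟨C, rfl⟩ := CStarAlgebra.nonneg_iff_eq_star_mul_self.mp hA.nonneg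
  rw [star_eq_conjTranspose, mul_assoc, trace_mul_comm, mul_assoc, ← mul_assoc]
  exact (hB.mul_mul_conjTranspose_same C).trace_nonneg

namespace Matrix.IsHermitian

variable {𝕜 n : Type*} [RCLike 𝕜] [Fintype n] {A : Matrix n n 𝕜}

lemma dotProduct_mulVec_add_of_mulVec_eq_zero (hA : A.IsHermitian) (x : n → 𝕜) {y : n → 𝕜}
    (hy : A *ᵥ y = 0) : star (x + y) ⬝ᵥ A *ᵥ (x + y) = star x ⬝ᵥ A *ᵥ x := by
  have hy' : star y ᵥ* A = 0 := by rw [← hA.eq, ← star_mulVec, hy, star_zero]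
  rw [mulVec_add, hy, add_zero, star_add, add_dotProduct, dotProduct_mulVec (star y), hy',
    zero_dotProduct, add_zero]

variable [DecidableEq n] (hA : A.IsHermitian)
include hA

lemma exists_eigenvalues_neg {ρ : Matrix n n 𝕜} (hρ : ρ.PosSemidef)
    (h : RCLike.re (ρ * A).trace < 0) : ∃ i, hA.eigenvalues i < 0 := by
  by_contra! hnonneg
  have := (RCLike.nonneg_iff.mp (hρ.trace_mul_nonneg
    (hA.posSemidef_iff_eigenvalues_nonneg.mpr hnonneg))).1
  linarith

lemma star_eigenvectorBasis_dotProduct (i j : n) :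
    star ⇑(hA.eigenvectorBasis i) ⬝ᵥ ⇑(hA.eigenvectorBasis j) = if i = j then 1 else 0 := by
  simpa [EuclideanSpace.inner_eq_star_dotProduct, dotProduct_comm _ (star _)] using
    orthonormal_iff_ite.mp hA.eigenvectorBasis.orthonormal i j

lemma sum_star_eigenvectorBasis_dotProduct_smul (v : n → 𝕜) :
    ∑ i, (star ⇑(hA.eigenvectorBasis i) ⬝ᵥ v) • ⇑(hA.eigenvectorBasis i) = v := by
  simpa [EuclideanSpace.inner_eq_star_dotProduct, dotProduct_comm _ (star _)] using
    congrArg WithLp.ofLp (hA.eigenvectorBasis.sum_repr' (WithLp.toLp 2 v))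

lemma star_eigenvectorBasis_dotProduct_mulVec (i : n) (v : n → 𝕜) :
    star ⇑(hA.eigenvectorBasis i) ⬝ᵥ (A *ᵥ v) =
      hA.eigenvalues i * (star ⇑(hA.eigenvectorBasis i) ⬝ᵥ v) := by
  have h : star ⇑(hA.eigenvectorBasis i) ᵥ* A = star (A *ᵥ ⇑(hA.eigenvectorBasis i)) := by
    rw [star_mulVec, hA.eq]
  rw [dotProduct_mulVec, h, mulVec_eigenvectorBasis, star_smul, star_trivial, smul_dotProduct,
    RCLike.real_smul_eq_coe_mul]

lemma eigenspace_toLin'_eq_span (μ : 𝕜) :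
    Module.End.eigenspace (toLin' A) μ =
      Submodule.span 𝕜
        ((fun i ↦ ⇑(hA.eigenvectorBasis i)) '' {i | (hA.eigenvalues i : 𝕜) = μ}) := by
  refine le_antisymm (fun v hv ↦ ?_) (Submodule.span_le.mpr ?_)
  · rw [Module.End.mem_eigenspace_iff, toLin'_apply] at hv
    rw [← hA.sum_star_eigenvectorBasis_dotProduct_smul v]
    refine Submodule.sum_mem _ fun i _ ↦ ?_
    by_cases hi : (hA.eigenvalues i : 𝕜) = μ
    · exact Submodule.smul_mem _ _ (Submodule.subset_span ⟨i, hi, rfl⟩)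
    · have h := hA.star_eigenvectorBasis_dotProduct_mulVec i v
      rw [hv, dotProduct_smul, smul_eq_mul] at h
      have : star ⇑(hA.eigenvectorBasis i) ⬝ᵥ v = 0 :=
        (mul_eq_zero.mp (by linear_combination -h)).resolve_left (sub_ne_zero.mpr hi)
      rw [this, zero_smul]
      exact Submodule.zero_mem _
  · rintro _ ⟨i, hi, rfl⟩
    rw [SetLike.mem_coe, Module.End.mem_eigenspace_iff, toLin'_apply, mulVec_eigenvectorBasis,
      ← hi, RCLike.real_smul_eq_coe_smul (K := 𝕜)]

lemma iSup_eigenspace_toLin'_eq_span (p : ℝ → Prop) :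
    ⨆ (μ : ℝ) (_ : p μ), Module.End.eigenspace (toLin' A) (μ : 𝕜) =
      Submodule.span 𝕜 ((fun i ↦ ⇑(hA.eigenvectorBasis i)) '' {i | p (hA.eigenvalues i)}) := by
  simp_rw [hA.eigenspace_toLin'_eq_span, ← Submodule.span_iUnion]
  congr 1
  ext v
  simp

lemma finrank_span_eigenvectorBasis (s : Set n) [Fintype s] :
    Module.finrank 𝕜 (Submodule.span 𝕜 ((fun i ↦ ⇑(hA.eigenvectorBasis i)) '' s)) =
      Fintype.card s := by
  rw [Set.image_eq_range]
  exact finrank_span_eq_card <|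
    (hA.eigenvectorBasis.orthonormal.linearIndependent.map' _
      (WithLp.linearEquiv 2 𝕜 (n → 𝕜)).ker).comp _ Subtype.val_injective

lemma finrank_iSup_eigenspace_toLin' (p : ℝ → Prop) [DecidablePred p] :
    Module.finrank 𝕜
        (⨆ (μ : ℝ) (_ : p μ), Module.End.eigenspace (toLin' A) (μ : 𝕜) : Submodule 𝕜 (n → 𝕜)) =
      Fintype.card {i // p (hA.eigenvalues i)} := by
  rw [hA.iSup_eigenspace_toLin'_eq_span, hA.finrank_span_eigenvectorBasis]
  rfl

lemma ker_toLin'_eq_bot (h : ∀ i, hA.eigenvalues i ≠ 0) : LinearMap.ker (toLin' A) = ⊥ := by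
  rw [← Module.End.eigenspace_zero, hA.eigenspace_toLin'_eq_span]
  simp [h]

lemma dotProduct_mulVec_smul_add_smul {i j : n} (hij : i ≠ j) (s t : 𝕜) :
    star (s • ⇑(hA.eigenvectorBasis i) + t • ⇑(hA.eigenvectorBasis j)) ⬝ᵥ
        A *ᵥ (s • ⇑(hA.eigenvectorBasis i) + t • ⇑(hA.eigenvectorBasis j)) =
      ((hA.eigenvalues i * ‖s‖ ^ 2 + hA.eigenvalues j * ‖t‖ ^ 2 : ℝ) : 𝕜) := by
  simp only [mulVec_add, mulVec_smul, mulVec_eigenvectorBasis, star_add, star_smul,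
    add_dotProduct, dotProduct_add, smul_dotProduct, dotProduct_smul,
    star_eigenvectorBasis_dotProduct, hij, hij.symm, if_true, if_false]
  simp only [RCLike.real_smul_eq_coe_smul (K := 𝕜), smul_eq_mul, RCLike.star_def]
  push_cast
  rw [← RCLike.conj_mul, ← RCLike.conj_mul]
  ring

end Matrix.IsHermitian

def det2 (w : Fin 2 × Fin 2 → ℂ) : ℂ := w (0, 0) * w (1, 1) - w (0, 1) * w (1, 0)

def det2Polar (a : Fin 2 × Fin 2 → ℂ) : (Fin 2 × Fin 2 → ℂ) →ₗ[ℂ] ℂ where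
  toFun b := a (0, 0) * b (1, 1) + b (0, 0) * a (1, 1) - a (0, 1) * b (1, 0) - b (0, 1) * a (1, 0)
  map_add' b c := by simp only [Pi.add_apply]; ring
  map_smul' z b := by simp only [Pi.smul_apply, smul_eq_mul, RingHom.id_apply]; ring

lemma det2_smul_add_smul (s t : ℂ) (a b : Fin 2 × Fin 2 → ℂ) :
    det2 (s • a + t • b) = s ^ 2 * det2 a + s * t * det2Polar a b + t ^ 2 * det2 b := by
  simp only [det2, det2Polar, LinearMap.coe_mk, AddHom.coe_mk, Pi.add_apply, Pi.smul_apply,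
    smul_eq_mul]
  ring

lemma det2_tensorVec (φ χ : Fin 2 → ℂ) : det2 (tensorVec φ χ) = 0 := by
  simp only [det2, tensorVec]
  ring

lemma exists_tensorVec_eq_of_det2_eq_zero {w : Fin 2 × Fin 2 → ℂ} (hw : det2 w = 0) :
    ∃ φ χ : Fin 2 → ℂ, tensorVec φ χ = w := by
  rw [det2, sub_eq_zero] at hw
  by_cases h00 : w (0, 0) = 0
  · by_cases h01 : w (0, 1) = 0
    · refine ⟨![0, 1], ![w (1, 0), w (1, 1)], funext fun ⟨i, j⟩ ↦ ?_⟩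
      fin_cases i <;> fin_cases j <;> simp [tensorVec, h00, h01]
    · have h10 : w (1, 0) = 0 := by simpa [h00, h01] using hw
      refine ⟨![w (0, 1), w (1, 1)], ![0, 1], funext fun ⟨i, j⟩ ↦ ?_⟩
      fin_cases i <;> fin_cases j <;> simp [tensorVec, h00, h10]
  · have h11 : w (1, 0) * (w (0, 1) / w (0, 0)) = w (1, 1) := by
      field_simp
      linear_combination -hw
    refine ⟨![w (0, 0), w (1, 0)], ![1, w (0, 1) / w (0, 0)], funext fun ⟨i, j⟩ ↦ ?_⟩
    fin_cases i <;> fin_cases j <;> simp [tensorVec, mul_div_cancel₀ _ h00, h11]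

lemma det2Polar_ne_zero {a : Fin 2 × Fin 2 → ℂ} (ha : a ≠ 0) : det2Polar a ≠ 0 := by
  refine fun h ↦ ha (funext fun ⟨i, j⟩ ↦ ?_)
  have := LinearMap.congr_fun h (Pi.single (1 - i, 1 - j) 1)
  fin_cases i <;> fin_cases j <;> simpa [det2Polar] using this

lemma exists_tensorVec_eq_smul_add_smul (a b : Fin 2 × Fin 2 → ℂ) :
    ∃ s t : ℂ, (s ≠ 0 ∨ t ≠ 0) ∧ ∃ φ χ : Fin 2 → ℂ, tensorVec φ χ = s • a + t • b := by
  obtain ⟨s, t, hst, h⟩ :=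
    IsAlgClosed.exists_ne_zero_quadratic_eq_zero (det2 a) (det2Polar a b) (det2 b)
  refine ⟨s, t, hst, exists_tensorVec_eq_of_det2_eq_zero ?_⟩
  rw [det2_smul_add_smul]
  linear_combination h

def IsBlockPositive {d1 d2 : ℕ} (W : Matrix (Fin d1 × Fin d2) (Fin d1 × Fin d2) ℂ) : Prop :=
  ∀ φ χ, 0 ≤ (star (tensorVec φ χ) ⬝ᵥ W *ᵥ tensorVec φ χ).re

namespace IsBlockPositive

variable {W : Matrix (Fin 2 × Fin 2) (Fin 2 × Fin 2) ℂ}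

lemma re_dotProduct_mulVec_nonneg_of_mulVec_tensorVec_eq_zero (hW : IsBlockPositive W)
    (hherm : W.IsHermitian) {φ χ : Fin 2 → ℂ} (hψ : tensorVec φ χ ≠ 0)
    (hker : W *ᵥ tensorVec φ χ = 0) (x : Fin 2 × Fin 2 → ℂ) :
    0 ≤ (star x ⬝ᵥ W *ᵥ x).re := by
  set ψ := tensorVec φ χ
  have hoff : (LinearMap.ker (det2Polar ψ) : Set _)ᶜ ⊆ {y | 0 ≤ (star y ⬝ᵥ W *ᵥ y).re} := by
    intro y hy
    set t := -det2 y / det2Polar ψ y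
    obtain ⟨φ', χ', hprod⟩ : ∃ φ' χ', tensorVec φ' χ' = y + t • ψ := by
      refine exists_tensorVec_eq_of_det2_eq_zero ?_
      rw [← one_smul ℂ y, add_comm, det2_smul_add_smul, det2_tensorVec, mul_zero, zero_add,
        mul_one, one_pow, one_mul, div_mul_cancel₀ _ hy, neg_add_cancel]
    have hq := hherm.dotProduct_mulVec_add_of_mulVec_eq_zero y (y := t • ψ)
      (by rw [mulVec_smul, hker, smul_zero])
    rw [Set.mem_ofPred_eq, ← hq, ← hprod]
    exact hW φ' χ'
  have hclosed : IsClosed {y : Fin 2 × Fin 2 → ℂ | 0 ≤ (star y ⬝ᵥ W *ᵥ y).re} :=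
    isClosed_le continuous_const (by fun_prop)
  have hdense := Submodule.dense_compl (LinearMap.ker_eq_top.not.mpr (det2Polar_ne_zero hψ))
  exact (hdense.closure_eq ▸ closure_minimal hoff hclosed) (Set.mem_univ x)

lemma eigenvalues_pos_of_ne (hW : IsBlockPositive W) (hherm : W.IsHermitian)
    {i j : Fin 2 × Fin 2} (hij : i ≠ j) (hj : hherm.eigenvalues j < 0) :
    0 < hherm.eigenvalues i := by
  obtain ⟨s, t, hst, φ, χ, hprod⟩ := exists_tensorVec_eq_smul_add_smul
    ⇑(hherm.eigenvectorBasis i) ⇑(hherm.eigenvectorBasis j)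
  have hq := hW φ χ
  rw [hprod, hherm.dotProduct_mulVec_smul_add_smul hij, ← RCLike.re_to_complex,
    RCLike.ofReal_re] at hq
  by_contra! hi
  have ht : t = 0 := by
    by_contra ht
    nlinarith [mul_nonpos_of_nonpos_of_nonneg hi (sq_nonneg ‖s‖),
      mul_neg_of_neg_of_pos hj (pow_pos (norm_pos_iff.mpr ht) 2)]
  have hs : s ≠ 0 := hst.resolve_right (not_not.mpr ht)
  have hi0 : hherm.eigenvalues i = 0 := by
    rw [ht, norm_zero] at hq
    nlinarith [pow_pos (norm_pos_iff.mpr hs) 2]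
  have hψ : tensorVec φ χ ≠ 0 := by
    rw [hprod, ht, zero_smul, add_zero]
    refine smul_ne_zero hs fun h ↦ ?_
    simpa [h] using hherm.star_eigenvectorBasis_dotProduct i i
  have hker : W *ᵥ tensorVec φ χ = 0 := by
    rw [hprod, ht, zero_smul, add_zero, mulVec_smul, hherm.mulVec_eigenvectorBasis, hi0, zero_smul,
      smul_zero]
  have hgj := hW.re_dotProduct_mulVec_nonneg_of_mulVec_tensorVec_eq_zero hherm hψ hker
    (hherm.eigenvectorBasis j)
  rw [hherm.star_eigenvectorBasis_dotProduct_mulVec, hherm.star_eigenvectorBasis_dotProduct,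
    if_pos rfl, mul_one, ← RCLike.re_to_complex, RCLike.ofReal_re] at hgj
  linarith

end IsBlockPositive

/-- Every entanglement witness on `ℂ² ⊗ ℂ²` has exactly one negative eigenvalue,
exactly three positive eigenvalues (with multiplicity), and trivial kernel. -/
theorem two_qubit_witness_signature
    (W : Matrix (Fin 2 × Fin 2) (Fin 2 × Fin 2) ℂ) (hherm : W.IsHermitian)
    (hpos : ∀ (φ χ : Fin 2 → ℂ),
      0 ≤ (star (tensorVec φ χ) ⬝ᵥ W.mulVec (tensorVec φ χ)).re)
    (hdet : ∃ ρ : Matrix (Fin 2 × Fin 2) (Fin 2 × Fin 2) ℂ,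
      ρ.PosSemidef ∧ ρ.trace = 1 ∧ Complex.re (Matrix.trace (ρ * W)) < 0) :
    Module.finrank ℂ (negSpace W) = 1 ∧
    Module.finrank ℂ (posSpace W) = 3 ∧
    LinearMap.ker (Matrix.toLin' W) = ⊥ := by
  obtain ⟨ρ, hρ, -, htr⟩ := hdet
  obtain ⟨j, hj⟩ := hherm.exists_eigenvalues_neg hρ htr
  have hothers : ∀ i, i ≠ j → 0 < hherm.eigenvalues i := fun i hij ↦
    IsBlockPositive.eigenvalues_pos_of_ne hpos hherm hij hj
  have hneg_iff : ∀ i, hherm.eigenvalues i < 0 ↔ i = j := fun i ↦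
    ⟨fun hi ↦ by_contra fun hij ↦ (hothers i hij).not_gt hi, fun h ↦ h ▸ hj⟩
  have hpos_iff : ∀ i, 0 < hherm.eigenvalues i ↔ i ≠ j := fun i ↦
    ⟨fun hi h ↦ (h ▸ hj).not_gt hi, hothers i⟩
  refine ⟨?_, ?_, hherm.ker_toLin'_eq_bot fun i ↦ ?_⟩
  · refine (hherm.finrank_iSup_eigenspace_toLin' (· < 0)).trans ?_
    rw [Fintype.card_congr (Equiv.subtypeEquivRight hneg_iff), Fintype.card_subtype_eq]
  · refine (hherm.finrank_iSup_eigenspace_toLin' (0 < ·)).trans ?_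
    rw [Fintype.card_congr (Equiv.subtypeEquivRight hpos_iff), Fintype.card_subtype_compl,
      Fintype.card_subtype_eq]
    rfl
  · by_cases hij : i = j
    · exact hij ▸ hj.ne
    · exact (hothers i hij).ne'
end
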